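/- Adding the congruence rule con. to LTS_CCS does not change strong bisimilarity classes: two finite CCS processes are strongly bisimilar with respect to LTS_CCS if and only if they are strongly bisimilar with respect to SPEC_CCS (= LTS_CCS plus con., for the finite fragment where rec. and rel. are absent). -/
import Mathlib


inductive Lab (N : Type) : Type
  | tau : Lab N
  | inp : N → Lab N
  | out : N → Lab N

def Lab.co {N : Type} : Lab N → Lab N
  | .tau => .tau
  | .inp a => .out a
  | .out a => .inp a

/-- `a ∉ α`: the label `α` is neither the name `a` nor its co-name. -/
def Lab.notIn {N : Type} (a : N) : Lab N → Prop
  | .tau => True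
  | .inp b => b ≠ a
  | .out b => b ≠ a

/-- Finite CCS processes: `P ::= 0 | λ.P | P|Q | P+Q | P\a`. -/
inductive Proc (N : Type) : Type
  | nil : Proc N
  | pre : Lab N → Proc N → Proc N
  | par : Proc N → Proc N → Proc N
  | sum : Proc N → Proc N → Proc N
  | res : N → Proc N → Proc N

/-- Free names. -/
def Proc.fn {N : Type} : Proc N → Set N
  | .nil => ∅
  | .pre l P => (match l with | .tau => ∅ | .inp a => {a} | .out a => {a}) ∪ P.fn
  | .par P Q => P.fn ∪ Q.fn
  | .sum P Q => P.fn ∪ Q.fn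
  | .res a P => P.fn \ {a}

/-- The labeled transition system LTS_CCS (finite fragment):
rules act., com₁, com₂, syn., sum., res. -/
inductive Step {N : Type} : Proc N → Lab N → Proc N → Prop
  | act (l : Lab N) (P : Proc N) : Step (.pre l P) l P
  | com1 {P P' Q : Proc N} {α : Lab N} :
      Step P α P' → Step (.par P Q) α (.par P' Q)
  | com2 {P Q Q' : Proc N} {α : Lab N} :
      Step Q α Q' → Step (.par P Q) α (.par P Q')
  | syn {P P' Q Q' : Proc N} {l : Lab N} :
      l ≠ Lab.tau → Step P l P' → Step Q l.co Q' →
      Step (.par P Q) .tau (.par P' Q')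
  | sum1 {P P' Q : Proc N} {α : Lab N} :
      Step P α P' → Step (.sum P Q) α P'
  | sum2 {P Q Q' : Proc N} {α : Lab N} :
      Step Q α Q' → Step (.sum P Q) α Q'
  | res {P P' : Proc N} {α : Lab N} {a : N} :
      Step P α P' → Lab.notIn a α → Step (.res a P) α (.res a P')

/-- Structural congruence on finite CCS processes. -/
inductive SC {N : Type} : Proc N → Proc N → Prop
  | refl (P : Proc N) : SC P P
  | symm {P Q : Proc N} : SC P Q → SC Q P
  | trans {P Q V : Proc N} : SC P Q → SC Q V → SC P V
  | parComm (P Q : Proc N) : SC (.par P Q) (.par Q P)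
  | parAssoc (P Q V : Proc N) : SC (.par (.par P Q) V) (.par P (.par Q V))
  | parNil (P : Proc N) : SC (.par P .nil) P
  | sumComm (P Q : Proc N) : SC (.sum P Q) (.sum Q P)
  | sumAssoc (P Q V : Proc N) : SC (.sum (.sum P Q) V) (.sum P (.sum Q V))
  | sumNil (P : Proc N) : SC (.sum P .nil) P
  | scope (a : N) (P Q : Proc N) : a ∉ Q.fn →
      SC (.par (.res a P) Q) (.res a (.par P Q))
  | resEx (a b : N) (P : Proc N) : SC (.res a (.res b P)) (.res b (.res a P))
  | preCtx (l : Lab N) {P Q : Proc N} : SC P Q → SC (.pre l P) (.pre l Q)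
  | parCtx {P P' Q Q' : Proc N} : SC P P' → SC Q Q' → SC (.par P Q) (.par P' Q')
  | sumCtx {P P' Q Q' : Proc N} : SC P P' → SC Q Q' → SC (.sum P Q) (.sum P' Q')
  | resCtx (a : N) {P Q : Proc N} : SC P Q → SC (.res a P) (.res a Q)

/-- `R` is a strong bisimulation for the transition relation `T`. -/
def IsBisim {N : Type} (T : Proc N → Lab N → Proc N → Prop)
    (R : Proc N → Proc N → Prop) : Prop :=
  ∀ P Q, R P Q →
    (∀ α P', T P α P' → ∃ Q', T Q α Q' ∧ R P' Q') ∧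
    (∀ α Q', T Q α Q' → ∃ P', T P α P' ∧ R P' Q')

/-- Strong bisimilarity: the union of all strong bisimulations. -/
def Bisim {N : Type} (T : Proc N → Lab N → Proc N → Prop) (P Q : Proc N) : Prop :=
  ∃ R, IsBisim T R ∧ R P Q

/-- SPEC_CCS for the finite fragment: LTS_CCS plus the congruence rule con. -/
inductive SpecStep {N : Type} : Proc N → Lab N → Proc N → Prop
  | act (l : Lab N) (P : Proc N) : SpecStep (.pre l P) l P
  | com1 {P P' Q α} : SpecStep P α P' → SpecStep (.par P Q) α (.par P' Q)
  | com2 {P Q Q' α} : SpecStep Q α Q' → SpecStep (.par P Q) α (.par P Q')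
  | syn {P P' Q Q' l} : l ≠ Lab.tau → SpecStep P l P' → SpecStep Q l.co Q' →
      SpecStep (.par P Q) .tau (.par P' Q')
  | sum1 {P P' Q α} : SpecStep P α P' → SpecStep (.sum P Q) α P'
  | sum2 {P Q Q' α} : SpecStep Q α Q' → SpecStep (.sum P Q) α Q'
  | res {P P' α a} : SpecStep P α P' → Lab.notIn a α →
      SpecStep (.res a P) α (.res a P')
  | con {P₁' P₁ P₂ P₂' α} : SC P₁' P₁ → SpecStep P₁ α P₂ → SC P₂ P₂' →
      SpecStep P₁' α P₂'

lemma co_co {N : Type} (l : Lab N) : l.co.co = l := by cases l <;> rfl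

lemma co_ne_tau {N : Type} {l : Lab N} (h : l ≠ .tau) : l.co ≠ .tau := by
  cases l <;> simp [Lab.co] at *

lemma notIn_co {N : Type} {a : N} {l : Lab N} (h : Lab.notIn a l) :
    Lab.notIn a l.co := by
  cases l <;> simp [Lab.co, Lab.notIn] at * <;> exact h

lemma step_fn {N : Type} {P : Proc N} {α : Lab N} {P' : Proc N}
    (h : Step P α P') : Proc.fn P' ⊆ Proc.fn P := by
  induction h with
  | act l P => intro x hx; exact Set.mem_union_right _ hx
  | com1 _ ih =>
      intro x hx
      rcases hx with hx | hx
      · exact Set.mem_union_left _ (ih hx)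
      · exact Set.mem_union_right _ hx
  | com2 _ ih =>
      intro x hx
      rcases hx with hx | hx
      · exact Set.mem_union_left _ hx
      · exact Set.mem_union_right _ (ih hx)
  | syn _ _ _ ih1 ih2 =>
      intro x hx
      rcases hx with hx | hx
      · exact Set.mem_union_left _ (ih1 hx)
      · exact Set.mem_union_right _ (ih2 hx)
  | sum1 _ ih => intro x hx; exact Set.mem_union_left _ (ih hx)
  | sum2 _ ih => intro x hx; exact Set.mem_union_right _ (ih hx)
  | res _ _ ih => intro x hx; exact ⟨ih hx.1, hx.2⟩

lemma step_notIn {N : Type} {P : Proc N} {α : Lab N} {P' : Proc N} {a : N}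
    (h : Step P α P') (ha : a ∉ Proc.fn P) : Lab.notIn a α := by
  induction h with
  | act l P =>
      cases l with
      | tau => trivial
      | inp b =>
          intro hba; exact ha (Set.mem_union_left _ (by simp [hba]))
      | out b =>
          intro hba; exact ha (Set.mem_union_left _ (by simp [hba]))
  | com1 _ ih => exact ih (fun hx => ha (Set.mem_union_left _ hx))
  | com2 _ ih => exact ih (fun hx => ha (Set.mem_union_right _ hx))
  | syn => trivial
  | sum1 _ ih => exact ih (fun hx => ha (Set.mem_union_left _ hx))
  | sum2 _ ih => exact ih (fun hx => ha (Set.mem_union_right _ hx))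
  | res hs hn ih =>
      rename_i P₀ P₀' α₀ b
      by_cases hab : a = b
      · subst hab; exact hn
      · exact ih (fun hx => ha ⟨hx, hab⟩)

/-- Transport of transitions along structural congruence, both directions. -/
lemma sc_step {N : Type} {P Q : Proc N} (h : SC P Q) :
    (∀ α P', Step P α P' → ∃ Q', Step Q α Q' ∧ SC P' Q') ∧
    (∀ α Q', Step Q α Q' → ∃ P', Step P α P' ∧ SC P' Q') := by
  induction h with
  | refl P => exact ⟨fun α P' h => ⟨P', h, .refl _⟩, fun α Q' h => ⟨Q', h, .refl _⟩⟩
  | symm _ ih =>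
      refine ⟨fun α X hX => ?_, fun α X hX => ?_⟩
      · obtain ⟨Y, hY, hs⟩ := ih.2 _ _ hX
        exact ⟨Y, hY, hs.symm⟩
      · obtain ⟨Y, hY, hs⟩ := ih.1 _ _ hX
        exact ⟨Y, hY, hs.symm⟩
  | trans _ _ ih1 ih2 =>
      constructor
      · intro α X hX
        obtain ⟨Y, hY, s1⟩ := ih1.1 _ _ hX
        obtain ⟨Z, hZ, s2⟩ := ih2.1 _ _ hY
        exact ⟨Z, hZ, s1.trans s2⟩
      · intro α X hX
        obtain ⟨Y, hY, s2⟩ := ih2.2 _ _ hX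
        obtain ⟨Z, hZ, s1⟩ := ih1.2 _ _ hY
        exact ⟨Z, hZ, s1.trans s2⟩
  | parComm P Q =>
      constructor
      · intro α X hX
        cases hX with
        | com1 h => exact ⟨_, .com2 h, .parComm _ _⟩
        | com2 h => exact ⟨_, .com1 h, .parComm _ _⟩
        | syn hne h1 h2 =>
            refine ⟨_, ?_, .parComm _ _⟩
            have := Step.syn (co_ne_tau hne) h2 (by rw [co_co]; exact h1)
            exact this
      · intro α X hX
        cases hX with
        | com1 h => exact ⟨_, .com2 h, .parComm _ _⟩
        | com2 h => exact ⟨_, .com1 h, .parComm _ _⟩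
        | syn hne h1 h2 =>
            refine ⟨_, ?_, .parComm _ _⟩
            exact Step.syn (co_ne_tau hne) h2 (by rw [co_co]; exact h1)
  | parAssoc P Q V =>
      constructor
      · intro α X hX
        cases hX with
        | com1 h =>
            cases h with
            | com1 hP => exact ⟨_, .com1 hP, .parAssoc _ _ _⟩
            | com2 hQ => exact ⟨_, .com2 (.com1 hQ), .parAssoc _ _ _⟩
            | syn hne h1 h2 => exact ⟨_, .syn hne h1 (.com1 h2), .parAssoc _ _ _⟩
        | com2 h => exact ⟨_, .com2 (.com2 h), .parAssoc _ _ _⟩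
        | syn hne h12 hV =>
            cases h12 with
            | com1 hP => exact ⟨_, .syn hne hP (.com2 hV), .parAssoc _ _ _⟩
            | com2 hQ => exact ⟨_, .com2 (.syn hne hQ hV), .parAssoc _ _ _⟩
            | syn hne' h1 h2 => exact absurd rfl hne
      · intro α X hX
        cases hX with
        | com1 hP => exact ⟨_, .com1 (.com1 hP), .parAssoc _ _ _⟩
        | com2 h =>
            cases h with
            | com1 hQ => exact ⟨_, .com1 (.com2 hQ), .parAssoc _ _ _⟩
            | com2 hV => exact ⟨_, .com2 hV, .parAssoc _ _ _⟩
            | syn hne h1 h2 => exact ⟨_, .syn hne (.com2 h1) h2, .parAssoc _ _ _⟩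
        | syn hne hP h =>
            rename_i _ _ l
            cases l with
            | tau => exact absurd rfl hne
            | inp n =>
                cases h with
                | com1 hQ => exact ⟨_, .com1 (.syn hne hP hQ), .parAssoc _ _ _⟩
                | com2 hV => exact ⟨_, .syn hne (.com1 hP) hV, .parAssoc _ _ _⟩
            | out n =>
                cases h with
                | com1 hQ => exact ⟨_, .com1 (.syn hne hP hQ), .parAssoc _ _ _⟩
                | com2 hV => exact ⟨_, .syn hne (.com1 hP) hV, .parAssoc _ _ _⟩
  | parNil P =>
      constructor
      · intro α X hX
        cases hX with
        | com1 h => exact ⟨_, h, .parNil _⟩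
        | com2 h => cases h
        | syn hne h1 h2 => cases h2
      · intro α X hX
        exact ⟨_, .com1 hX, .parNil _⟩
  | sumComm P Q =>
      constructor
      · intro α X hX
        cases hX with
        | sum1 h => exact ⟨_, .sum2 h, .refl _⟩
        | sum2 h => exact ⟨_, .sum1 h, .refl _⟩
      · intro α X hX
        cases hX with
        | sum1 h => exact ⟨_, .sum2 h, .refl _⟩
        | sum2 h => exact ⟨_, .sum1 h, .refl _⟩
  | sumAssoc P Q V =>
      constructor
      · intro α X hX
        cases hX with
        | sum1 h =>
            cases h with
            | sum1 hP => exact ⟨_, .sum1 hP, .refl _⟩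
            | sum2 hQ => exact ⟨_, .sum2 (.sum1 hQ), .refl _⟩
        | sum2 h => exact ⟨_, .sum2 (.sum2 h), .refl _⟩
      · intro α X hX
        cases hX with
        | sum1 h => exact ⟨_, .sum1 (.sum1 h), .refl _⟩
        | sum2 h =>
            cases h with
            | sum1 hQ => exact ⟨_, .sum1 (.sum2 hQ), .refl _⟩
            | sum2 hV => exact ⟨_, .sum2 hV, .refl _⟩
  | sumNil P =>
      constructor
      · intro α X hX
        cases hX with
        | sum1 h => exact ⟨_, h, .refl _⟩
        | sum2 h => cases h
      · intro α X hX
        exact ⟨_, .sum1 hX, .refl _⟩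
  | scope a P Q hQ =>
      constructor
      · intro α X hX
        cases hX with
        | com1 h =>
            cases h with
            | res hP hn => exact ⟨_, .res (.com1 hP) hn, .scope a _ _ hQ⟩
        | com2 h =>
            exact ⟨_, .res (.com2 h) (step_notIn h hQ),
              .scope a _ _ (fun hx => hQ (step_fn h hx))⟩
        | syn hne h1 h2 =>
            cases h1 with
            | res hP hn =>
                exact ⟨_, .res (.syn hne hP h2) trivial,
                  .scope a _ _ (fun hx => hQ (step_fn h2 hx))⟩
      · intro α X hX
        cases hX with
        | res h hn =>
            cases h with
            | com1 hP => exact ⟨_, .com1 (.res hP hn), .scope a _ _ hQ⟩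
            | com2 hQ' =>
                exact ⟨_, .com2 hQ', .scope a _ _ (fun hx => hQ (step_fn hQ' hx))⟩
            | syn hne h1 h2 =>
                have hl := notIn_co (step_notIn h2 hQ)
                rw [co_co] at hl
                exact ⟨_, .syn hne (.res h1 hl) h2,
                  .scope a _ _ (fun hx => hQ (step_fn h2 hx))⟩
  | resEx a b P =>
      constructor
      · intro α X hX
        cases hX with
        | res h ha =>
            cases h with
            | res hP hb => exact ⟨_, .res (.res hP ha) hb, .resEx _ _ _⟩
      · intro α X hX
        cases hX with
        | res h hb =>
            cases h with
            | res hP ha => exact ⟨_, .res (.res hP hb) ha, .resEx _ _ _⟩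
  | preCtx l h ih =>
      rename_i P₀ Q₀
      constructor
      · intro α X hX
        cases hX with
        | act => exact ⟨Q₀, .act l Q₀, h⟩
      · intro α X hX
        cases hX with
        | act => exact ⟨P₀, .act l P₀, h⟩
  | parCtx hP hQ ihP ihQ =>
      constructor
      · intro α X hX
        cases hX with
        | com1 h =>
            obtain ⟨d, hd, hs⟩ := ihP.1 _ _ h
            exact ⟨_, .com1 hd, .parCtx hs hQ⟩
        | com2 h =>
            obtain ⟨d, hd, hs⟩ := ihQ.1 _ _ h
            exact ⟨_, .com2 hd, .parCtx hP hs⟩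
        | syn hne h1 h2 =>
            obtain ⟨d1, hd1, hs1⟩ := ihP.1 _ _ h1
            obtain ⟨d2, hd2, hs2⟩ := ihQ.1 _ _ h2
            exact ⟨_, .syn hne hd1 hd2, .parCtx hs1 hs2⟩
      · intro α X hX
        cases hX with
        | com1 h =>
            obtain ⟨d, hd, hs⟩ := ihP.2 _ _ h
            exact ⟨_, .com1 hd, .parCtx hs hQ⟩
        | com2 h =>
            obtain ⟨d, hd, hs⟩ := ihQ.2 _ _ h
            exact ⟨_, .com2 hd, .parCtx hP hs⟩
        | syn hne h1 h2 =>
            obtain ⟨d1, hd1, hs1⟩ := ihP.2 _ _ h1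
            obtain ⟨d2, hd2, hs2⟩ := ihQ.2 _ _ h2
            exact ⟨_, .syn hne hd1 hd2, .parCtx hs1 hs2⟩
  | sumCtx hP hQ ihP ihQ =>
      constructor
      · intro α X hX
        cases hX with
        | sum1 h =>
            obtain ⟨d, hd, hs⟩ := ihP.1 _ _ h
            exact ⟨_, .sum1 hd, hs⟩
        | sum2 h =>
            obtain ⟨d, hd, hs⟩ := ihQ.1 _ _ h
            exact ⟨_, .sum2 hd, hs⟩
      · intro α X hX
        cases hX with
        | sum1 h =>
            obtain ⟨d, hd, hs⟩ := ihP.2 _ _ h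
            exact ⟨_, .sum1 hd, hs⟩
        | sum2 h =>
            obtain ⟨d, hd, hs⟩ := ihQ.2 _ _ h
            exact ⟨_, .sum2 hd, hs⟩
  | resCtx a h ih =>
      constructor
      · intro α X hX
        cases hX with
        | res hs hn =>
            obtain ⟨d, hd, hsc⟩ := ih.1 _ _ hs
            exact ⟨_, .res hd hn, .resCtx a hsc⟩
      · intro α X hX
        cases hX with
        | res hs hn =>
            obtain ⟨d, hd, hsc⟩ := ih.2 _ _ hs
            exact ⟨_, .res hd hn, .resCtx a hsc⟩

lemma step_spec {N : Type} {P : Proc N} {α : Lab N} {P' : Proc N}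
    (h : Step P α P') : SpecStep P α P' := by
  induction h with
  | act l P => exact .act l P
  | com1 _ ih => exact .com1 ih
  | com2 _ ih => exact .com2 ih
  | syn hne _ _ ih1 ih2 => exact .syn hne ih1 ih2
  | sum1 _ ih => exact .sum1 ih
  | sum2 _ ih => exact .sum2 ih
  | res _ hn ih => exact .res ih hn

lemma spec_decomp {N : Type} {P : Proc N} {α : Lab N} {P' : Proc N}
    (h : SpecStep P α P') : ∃ A B, SC P A ∧ Step A α B ∧ SC B P' := by
  induction h with
  | act l P => exact ⟨_, _, .refl _, .act l P, .refl _⟩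
  | com1 _ ih =>
      obtain ⟨A, B, s1, st, s2⟩ := ih
      exact ⟨_, _, .parCtx s1 (.refl _), .com1 st, .parCtx s2 (.refl _)⟩
  | com2 _ ih =>
      obtain ⟨A, B, s1, st, s2⟩ := ih
      exact ⟨_, _, .parCtx (.refl _) s1, .com2 st, .parCtx (.refl _) s2⟩
  | syn hne _ _ ih1 ih2 =>
      obtain ⟨A1, B1, s11, st1, s21⟩ := ih1
      obtain ⟨A2, B2, s12, st2, s22⟩ := ih2
      exact ⟨_, _, .parCtx s11 s12, .syn hne st1 st2, .parCtx s21 s22⟩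
  | sum1 _ ih =>
      obtain ⟨A, B, s1, st, s2⟩ := ih
      exact ⟨_, _, .sumCtx s1 (.refl _), .sum1 st, s2⟩
  | sum2 _ ih =>
      obtain ⟨A, B, s1, st, s2⟩ := ih
      exact ⟨_, _, .sumCtx (.refl _) s1, .sum2 st, s2⟩
  | res _ hn ih =>
      rename_i P₀ P₀' α₀ a _
      obtain ⟨A, B, s1, st, s2⟩ := ih
      exact ⟨_, _, .resCtx a s1, .res st hn, .resCtx a s2⟩
  | con h1 _ h2 ih =>
      obtain ⟨A, B, s1, st, s2⟩ := ih
      exact ⟨_, _, h1.trans s1, st, s2.trans h2⟩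

/-- adding the rule con. does not change strong bisimilarity. -/
theorem bisim_lts_iff_spec {N : Type} (P Q : Proc N) :
    Bisim Step P Q ↔ Bisim SpecStep P Q := by
  constructor
  · rintro ⟨R, hR, hPQ⟩
    refine ⟨fun a b => ∃ a' b', SC a a' ∧ SC b b' ∧ R a' b', ?_,
      P, Q, .refl _, .refl _, hPQ⟩
    rintro a b ⟨a', b', ha, hb, hab⟩
    constructor
    · intro α a₂ h
      obtain ⟨c, c', hac, hcc', hc'⟩ := spec_decomp h
      obtain ⟨d, hd, hdc'⟩ := (sc_step (ha.symm.trans hac)).2 _ _ hcc'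
      obtain ⟨e, he, hde⟩ := (hR a' b' hab).1 _ _ hd
      exact ⟨e, .con hb (step_spec he) (.refl _),
        d, e, hc'.symm.trans hdc'.symm, .refl _, hde⟩
    · intro α b₂ h
      obtain ⟨c, c', hbc, hcc', hc'⟩ := spec_decomp h
      obtain ⟨d, hd, hdc'⟩ := (sc_step (hb.symm.trans hbc)).2 _ _ hcc'
      obtain ⟨e, he, hed⟩ := (hR a' b' hab).2 _ _ hd
      exact ⟨e, .con ha (step_spec he) (.refl _),
        e, d, .refl _, hc'.symm.trans hdc'.symm, hed⟩
  · rintro ⟨R, hR, hPQ⟩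
    refine ⟨fun a b => ∃ a' b', SC a a' ∧ SC b b' ∧ R a' b', ?_,
      P, Q, .refl _, .refl _, hPQ⟩
    rintro a b ⟨a', b', ha, hb, hab⟩
    constructor
    · intro α a₂ h
      obtain ⟨d, hd, ha₂d⟩ := (sc_step ha).1 _ _ h
      obtain ⟨e, he, hde⟩ := (hR a' b' hab).1 _ _ (step_spec hd)
      obtain ⟨c, c', hbc, hcc', hc'e⟩ := spec_decomp he
      obtain ⟨f, hf, hfc'⟩ := (sc_step (hb.trans hbc)).2 _ _ hcc'
      exact ⟨f, hf, d, e, ha₂d, hfc'.trans hc'e, hde⟩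
    · intro α b₂ h
      obtain ⟨d, hd, hb₂d⟩ := (sc_step hb).1 _ _ h
      obtain ⟨e, he, hed⟩ := (hR a' b' hab).2 _ _ (step_spec hd)
      obtain ⟨c, c', hac, hcc', hc'e⟩ := spec_decomp he
      obtain ⟨f, hf, hfc'⟩ := (sc_step (ha.trans hac)).2 _ _ hcc'
      exact ⟨f, hf, e, d, hfc'.trans hc'e, hb₂d, hed⟩
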